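/- arXiv:cond-mat/0112025 — 2 statements merged into one kernel-verified Lean document; each statement's English description precedes it below -/
import Mathlib

section
/- For every β > 2 there exists r > 0 such that r = (1/√(2π)) ∫_ℝ ξ tanh(βξr/2) exp(−ξ²/2) dξ. -/
open Real MeasureTheory Set

lemma my_continuous_tanh : Continuous Real.tanh := by
  have : Real.tanh = fun x => Real.sinh x / Real.cosh x := funext fun x => Real.tanh_eq_sinh_div_cosh x
  rw [this]
  exact Real.continuous_sinh.div Real.continuous_cosh fun x => (Real.cosh_pos x).ne'

lemma my_abs_tanh_le_one (x : ℝ) : |Real.tanh x| ≤ 1 := by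
  rw [Real.tanh_eq_sinh_div_cosh, abs_div, abs_of_pos (Real.cosh_pos x),
    div_le_one (Real.cosh_pos x)]
  rcases abs_cases (Real.sinh x) with ⟨h, _⟩ | ⟨h, _⟩
  · rw [h]; exact (Real.sinh_lt_cosh x).le
  · rw [h, ← Real.sinh_neg]
    have h2 := (Real.sinh_lt_cosh (-x)).le
    rwa [Real.cosh_neg] at h2

lemma my_cosh_le (x : ℝ) (h0 : 0 ≤ x) (h1 : x ≤ 1) : Real.cosh x ≤ 1 + x ^ 2 := by
  have hb1 := Real.exp_bound (x := x) (by rw [abs_of_nonneg h0]; exact h1) (n := 3) (by norm_num)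
  have hb2 := Real.exp_bound (x := -x) (by rwa [abs_neg, abs_of_nonneg h0]) (n := 3) (by norm_num)
  rw [Real.cosh_eq]
  simp only [Finset.sum_range_succ, Finset.sum_range_zero] at hb1 hb2
  norm_num at hb1 hb2
  rw [abs_of_nonneg h0] at hb1
  rw [abs_of_nonneg h0] at hb2
  have e1 := (abs_sub_le_iff.1 hb1).1
  have e2 := (abs_sub_le_iff.1 hb2).1
  norm_num [Nat.factorial] at e1 e2
  nlinarith [pow_le_pow_left₀ h0 h1 3, sq_nonneg x]

lemma my_tanh_lb (x : ℝ) (h0 : 0 ≤ x) : x - x ^ 3 ≤ Real.tanh x := by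
  rcases le_or_gt x 1 with h1 | h1
  · rw [Real.tanh_eq_sinh_div_cosh, le_div_iff₀ (Real.cosh_pos x)]
    have hc := my_cosh_le x h0 h1
    have hs : x ≤ Real.sinh x := by
      rcases eq_or_lt_of_le h0 with h | h
      · simp [← h]
      · exact (Real.self_lt_sinh_iff.2 h).le
    have hx3 : 0 ≤ x - x ^ 3 := by nlinarith
    calc (x - x ^ 3) * Real.cosh x ≤ (x - x ^ 3) * (1 + x ^ 2) := by nlinarith
      _ ≤ x := by nlinarith [pow_nonneg h0 5]
      _ ≤ Real.sinh x := hs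
  · have ht : 0 ≤ Real.tanh x := by
      rw [Real.tanh_eq_sinh_div_cosh]
      exact div_nonneg (by positivity) (Real.cosh_pos x).le
    nlinarith [mul_nonneg (by linarith : (0:ℝ) ≤ x) (by nlinarith : (0:ℝ) ≤ x ^ 2 - 1)]

lemma my_pointwise_lb (a : ℝ) (ha : 0 ≤ a) (ξ : ℝ) :
    a * ξ ^ 2 - a ^ 3 * ξ ^ 4 ≤ ξ * Real.tanh (a * ξ) := by
  rcases le_or_gt 0 ξ with hξ | hξ
  · have := my_tanh_lb (a * ξ) (by positivity)
    have h2 := mul_le_mul_of_nonneg_left this hξ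
    nlinarith
  · have h0 : 0 ≤ a * (-ξ) := mul_nonneg ha (by linarith)
    have := my_tanh_lb (a * (-ξ)) h0
    have h2 := mul_le_mul_of_nonneg_left this (by linarith : (0:ℝ) ≤ -ξ)
    have h3 : ξ * Real.tanh (a * ξ) = (-ξ) * Real.tanh (a * (-ξ)) := by
      rw [mul_neg, Real.tanh_neg]; ring
    rw [h3]
    nlinarith

lemma my_rpow_two (x : ℝ) : x ^ (2:ℝ) = x ^ 2 := by
  rw [show (2:ℝ) = ((2:ℕ):ℝ) by norm_num, Real.rpow_natCast]

lemma my_rpow_four (x : ℝ) : x ^ (4:ℝ) = x ^ 4 := by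
  rw [show (4:ℝ) = ((4:ℕ):ℝ) by norm_num, Real.rpow_natCast]

lemma my_I2 : Integrable (fun x : ℝ => x ^ 2 * Real.exp (-x ^ 2 / 2)) := by
  have h := integrable_rpow_mul_exp_neg_mul_sq (b := 1/2) (by norm_num) (s := 2) (by norm_num)
  refine h.congr (Filter.Eventually.of_forall fun x => ?_)
  simp only [my_rpow_two]; ring_nf

lemma my_I4 : Integrable (fun x : ℝ => x ^ 4 * Real.exp (-x ^ 2 / 2)) := by
  have h := integrable_rpow_mul_exp_neg_mul_sq (b := 1/2) (by norm_num) (s := 4) (by norm_num)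
  refine h.congr (Filter.Eventually.of_forall fun x => ?_)
  simp only [my_rpow_four]; ring_nf

lemma my_Iabs : Integrable (fun x : ℝ => |x| * Real.exp (-x ^ 2 / 2)) := by
  have h := (integrable_mul_exp_neg_mul_sq (b := 1/2) (by norm_num)).abs
  refine h.congr (Filter.Eventually.of_forall fun x => ?_)
  simp only [abs_mul, abs_of_pos (Real.exp_pos _)]; ring_nf

lemma my_M2 : ∫ x : ℝ, x ^ 2 * Real.exp (-x ^ 2 / 2) = Real.sqrt (2 * Real.pi) := by
  have h1 : (fun x : ℝ => x ^ 2 * Real.exp (-x ^ 2 / 2))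
      = fun x : ℝ => |x| ^ 2 * Real.exp (-|x| ^ 2 / 2) := by
    funext x; rw [sq_abs]
  rw [h1, integral_comp_abs (f := fun t => t ^ 2 * Real.exp (-t ^ 2 / 2))]
  have h2 : ∫ x in Ioi (0:ℝ), x ^ 2 * Real.exp (-x ^ 2 / 2)
      = ∫ x in Ioi (0:ℝ), x ^ (2:ℝ) * Real.exp (-(1/2) * x ^ (2:ℝ)) := by
    refine setIntegral_congr_fun measurableSet_Ioi fun x _ => ?_
    simp only [my_rpow_two]; ring_nf
  rw [h2, integral_rpow_mul_exp_neg_mul_rpow (by norm_num) (by norm_num) (by norm_num)]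
  have hG : Real.Gamma ((2 + 1) / 2) = Real.sqrt Real.pi / 2 := by
    rw [show ((2:ℝ) + 1) / 2 = 1/2 + 1 by norm_num, Real.Gamma_add_one (by norm_num),
      Real.Gamma_one_half_eq]
    ring
  rw [hG]
  have hb : ((1:ℝ)/2) ^ (-((2:ℝ) + 1) / 2) = 2 * Real.sqrt 2 := by
    rw [show (-((2:ℝ) + 1) / 2) = -(3/2) by norm_num, one_div, Real.inv_rpow (by norm_num),
      ← Real.rpow_neg (by norm_num), neg_neg, show (3/2:ℝ) = 1 + 1/2 by norm_num,
      Real.rpow_add (by norm_num), Real.rpow_one, ← Real.sqrt_eq_rpow]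
  rw [hb, Real.sqrt_mul (by norm_num)]
  ring

lemma my_M4 : ∫ x : ℝ, x ^ 4 * Real.exp (-x ^ 2 / 2) = 3 * Real.sqrt (2 * Real.pi) := by
  have h1 : (fun x : ℝ => x ^ 4 * Real.exp (-x ^ 2 / 2))
      = fun x : ℝ => |x| ^ 4 * Real.exp (-|x| ^ 2 / 2) := by
    funext x; rw [sq_abs, show |x| ^ 4 = x ^ 4 by rw [← abs_pow]; exact abs_of_nonneg (by positivity)]
  rw [h1]
  rw [integral_comp_abs (f := fun t => t ^ 4 * Real.exp (-t ^ 2 / 2))]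
  have h2 : ∫ x in Ioi (0:ℝ), x ^ 4 * Real.exp (-x ^ 2 / 2)
      = ∫ x in Ioi (0:ℝ), x ^ (4:ℝ) * Real.exp (-(1/2) * x ^ (2:ℝ)) := by
    refine setIntegral_congr_fun measurableSet_Ioi fun x _ => ?_
    simp only [my_rpow_two, my_rpow_four]; ring_nf
  rw [h2, integral_rpow_mul_exp_neg_mul_rpow (by norm_num) (by norm_num) (by norm_num)]
  have hG : Real.Gamma ((4 + 1) / 2) = 3 * Real.sqrt Real.pi / 4 := by
    rw [show ((4:ℝ) + 1) / 2 = 3/2 + 1 by norm_num, Real.Gamma_add_one (by norm_num),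
      show (3/2:ℝ) = 1/2 + 1 by norm_num, Real.Gamma_add_one (by norm_num),
      Real.Gamma_one_half_eq]
    ring
  rw [hG]
  have hb : ((1:ℝ)/2) ^ (-((4:ℝ) + 1) / 2) = 4 * Real.sqrt 2 := by
    rw [show (-((4:ℝ) + 1) / 2) = -(5/2) by norm_num, one_div, Real.inv_rpow (by norm_num),
      ← Real.rpow_neg (by norm_num), neg_neg, show (5/2:ℝ) = 2 + 1/2 by norm_num,
      Real.rpow_add (by norm_num), ← Real.sqrt_eq_rpow, my_rpow_two]
    norm_num
  rw [hb, Real.sqrt_mul (by norm_num)]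
  ring

lemma my_Iquarter : Integrable (fun x : ℝ => Real.exp (-x ^ 2 / 4)) := by
  have h := integrable_exp_neg_mul_sq (b := 1/4) (by norm_num)
  refine h.congr (Filter.Eventually.of_forall fun x => ?_)
  ring_nf

lemma my_abs_le_quarter (x : ℝ) : |x| * Real.exp (-x ^ 2 / 2) ≤ Real.exp (-x ^ 2 / 4) := by
  have h1 : |x| ≤ Real.exp (x ^ 2 / 4) := by
    have := Real.add_one_le_exp (x ^ 2 / 4)
    nlinarith [sq_nonneg (|x| - 2), sq_abs x]
  calc |x| * Real.exp (-x ^ 2 / 2) ≤ Real.exp (x ^ 2 / 4) * Real.exp (-x ^ 2 / 2) :=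
        mul_le_mul_of_nonneg_right h1 (Real.exp_pos _).le
    _ = Real.exp (-x ^ 2 / 4) := by rw [← Real.exp_add]; ring_nf

lemma my_gauss_quarter : ∫ x : ℝ, Real.exp (-x ^ 2 / 4) = Real.sqrt (4 * Real.pi) := by
  have h : ∫ x : ℝ, Real.exp (-(1/4) * x ^ 2) = Real.sqrt (Real.pi / (1/4)) :=
    integral_gaussian (1/4)
  rw [show Real.pi / (1/4) = 4 * Real.pi by ring] at h
  rw [← h]
  congr 1; funext x; ring_nf

theorem ising_fixed_point_exists (β : ℝ) (hβ : 2 < β) :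
    ∃ r : ℝ, 0 < r ∧
      r = (1 / Real.sqrt (2 * Real.pi)) *
        ∫ ξ : ℝ, ξ * Real.tanh (β * ξ * r / 2) * Real.exp (-ξ^2 / 2) := by
  have hπ : 0 < Real.sqrt (2 * Real.pi) := Real.sqrt_pos.2 (by positivity)
  set Φ : ℝ → ℝ → ℝ := fun r ξ => ξ * Real.tanh (β * ξ * r / 2) * Real.exp (-ξ ^ 2 / 2) with hΦ
  have hcont : ∀ r, Continuous (Φ r) := by
    intro r
    exact (continuous_id.mul (my_continuous_tanh.comp (by continuity))).mul
      (Real.continuous_exp.comp ((continuous_pow (M := ℝ) 2).neg.div_const 2))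
  have hbound : ∀ r ξ, ‖Φ r ξ‖ ≤ |ξ| * Real.exp (-ξ ^ 2 / 2) := by
    intro r ξ
    rw [hΦ]
    simp only [Real.norm_eq_abs, abs_mul, abs_of_pos (Real.exp_pos _)]
    have h1 := my_abs_tanh_le_one (β * ξ * r / 2)
    have h2 : |ξ| * |Real.tanh (β * ξ * r / 2)| ≤ |ξ| * 1 :=
      mul_le_mul_of_nonneg_left h1 (abs_nonneg ξ)
    have h3 := mul_le_mul_of_nonneg_right h2 (Real.exp_pos (-ξ ^ 2 / 2)).le
    nlinarith [h3]
  have hIΦ : ∀ r, Integrable (Φ r) := by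
    intro r
    exact my_Iabs.mono' (hcont r).aestronglyMeasurable
      (Filter.Eventually.of_forall (hbound r))
  have hG : Continuous fun r => ∫ ξ, Φ r ξ := by
    refine MeasureTheory.continuous_of_dominated (fun r => (hcont r).aestronglyMeasurable)
      (fun r => Filter.Eventually.of_forall (hbound r)) my_Iabs
      (Filter.Eventually.of_forall fun ξ => ?_)
    exact (continuous_const.mul (my_continuous_tanh.comp (by continuity))).mul continuous_const
  -- upper bound at r = 2
  have hup : (1 / Real.sqrt (2 * Real.pi)) * ∫ ξ, Φ 2 ξ < 2 := by
    have h1 : ∫ ξ, Φ 2 ξ ≤ ∫ ξ : ℝ, |ξ| * Real.exp (-ξ ^ 2 / 2) := by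
      refine integral_mono (hIΦ 2) my_Iabs fun ξ => ?_
      exact (le_abs_self _).trans (by simpa using hbound 2 ξ)
    have h2 : ∫ ξ : ℝ, |ξ| * Real.exp (-ξ ^ 2 / 2) ≤ ∫ ξ : ℝ, Real.exp (-ξ ^ 2 / 4) :=
      integral_mono my_Iabs my_Iquarter fun ξ => my_abs_le_quarter ξ
    have heq : Real.sqrt (4 * (2 * Real.pi)) = 2 * Real.sqrt (2 * Real.pi) := by
      rw [show (4:ℝ) * (2 * Real.pi) = 2^2 * (2 * Real.pi) by norm_num,
        Real.sqrt_mul (by positivity), Real.sqrt_sq (by norm_num)]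
    have h3 : Real.sqrt (4 * Real.pi) < 2 * Real.sqrt (2 * Real.pi) := by
      rw [← heq]
      exact Real.sqrt_lt_sqrt (by positivity) (by nlinarith [Real.pi_pos])
    rw [one_div, inv_mul_lt_iff₀ hπ]
    have h4 := my_gauss_quarter
    nlinarith [h1, h2]
  -- lower bound at r1
  set s : ℝ := β / 2 with hsdef
  have hs : 1 < s := by rw [hsdef]; linarith
  have hspos : 0 < s := by linarith
  set r1 : ℝ := Real.sqrt ((s - 1) / (6 * s ^ 3)) with hr1def
  have hr1pos : 0 < r1 := Real.sqrt_pos.2 (div_pos (by linarith) (by positivity))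
  have hr1sq : r1 ^ 2 = (s - 1) / (6 * s ^ 3) := Real.sq_sqrt (le_of_lt (div_pos (by linarith) (by positivity)))
  have hr1le : r1 ≤ 2 := by
    rw [hr1def, show (2:ℝ) = Real.sqrt (2^2) from (Real.sqrt_sq (by norm_num)).symm]
    apply Real.sqrt_le_sqrt
    rw [div_le_iff₀ (by positivity)]
    nlinarith [mul_pos (mul_pos hspos (sub_pos.2 hs)) (show (0:ℝ) < s + 1 by linarith)]
  set a : ℝ := s * r1 with hadef
  have hapos : 0 < a := by positivity
  have hlow : r1 < (1 / Real.sqrt (2 * Real.pi)) * ∫ ξ, Φ r1 ξ := by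
    have hpt : ∀ ξ : ℝ, (a * ξ ^ 2 - a ^ 3 * ξ ^ 4) * Real.exp (-ξ ^ 2 / 2) ≤ Φ r1 ξ := by
      intro ξ
      have h0 := my_pointwise_lb a hapos.le ξ
      have h1 : β * ξ * r1 / 2 = a * ξ := by rw [hadef, hsdef]; ring
      rw [hΦ]
      simp only [h1]
      nlinarith [mul_le_mul_of_nonneg_right h0 (Real.exp_pos (-ξ ^ 2 / 2)).le]
    have hIlhs : Integrable (fun ξ : ℝ => (a * ξ ^ 2 - a ^ 3 * ξ ^ 4) * Real.exp (-ξ ^ 2 / 2)) := by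
      have := (my_I2.const_mul a).sub (my_I4.const_mul (a ^ 3))
      refine this.congr (Filter.Eventually.of_forall fun x => ?_)
      simp only [Pi.sub_apply]; ring
    have hval : ∫ ξ : ℝ, (a * ξ ^ 2 - a ^ 3 * ξ ^ 4) * Real.exp (-ξ ^ 2 / 2)
        = a * Real.sqrt (2 * Real.pi) - a ^ 3 * (3 * Real.sqrt (2 * Real.pi)) := by
      have heq : (fun ξ : ℝ => (a * ξ ^ 2 - a ^ 3 * ξ ^ 4) * Real.exp (-ξ ^ 2 / 2))
          = fun ξ : ℝ => a * (ξ ^ 2 * Real.exp (-ξ ^ 2 / 2))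
            - a ^ 3 * (ξ ^ 4 * Real.exp (-ξ ^ 2 / 2)) := by
        funext ξ; ring
      rw [heq, integral_sub (my_I2.const_mul a) (my_I4.const_mul (a ^ 3)),
        integral_const_mul, integral_const_mul, my_M2, my_M4]
    have hmono : a * Real.sqrt (2 * Real.pi) - a ^ 3 * (3 * Real.sqrt (2 * Real.pi))
        ≤ ∫ ξ, Φ r1 ξ := by
      rw [← hval]
      exact integral_mono hIlhs (hIΦ r1) hpt
    have hkey : r1 < (1 / Real.sqrt (2 * Real.pi)) *
        (a * Real.sqrt (2 * Real.pi) - a ^ 3 * (3 * Real.sqrt (2 * Real.pi))) := by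
      have : (1 / Real.sqrt (2 * Real.pi)) *
          (a * Real.sqrt (2 * Real.pi) - a ^ 3 * (3 * Real.sqrt (2 * Real.pi)))
          = a - 3 * a ^ 3 := by
        field_simp
      rw [this, hadef]
      have h3 : s * r1 - 3 * (s * r1) ^ 3 = r1 * (s - 3 * s ^ 3 * r1 ^ 2) := by ring
      have h4 : s - 3 * s ^ 3 * r1 ^ 2 = (s + 1) / 2 := by
        rw [hr1sq]
        field_simp
        ring
      rw [h3, h4]
      nlinarith
    calc r1 < _ := hkey
      _ ≤ (1 / Real.sqrt (2 * Real.pi)) * ∫ ξ, Φ r1 ξ := by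
        apply mul_le_mul_of_nonneg_left hmono (by positivity)
  -- intermediate value theorem
  set g : ℝ → ℝ := fun r => (1 / Real.sqrt (2 * Real.pi)) * (∫ ξ, Φ r ξ) - r with hgdef
  have hgc : Continuous g := (continuous_const.mul hG).sub continuous_id
  have hg1 : 0 < g r1 := by rw [hgdef]; simp only; linarith
  have hg2 : g 2 < 0 := by rw [hgdef]; simp only; linarith
  have hsub := intermediate_value_Icc' hr1le hgc.continuousOn
  have h0mem : (0:ℝ) ∈ Icc (g 2) (g r1) := ⟨hg2.le, hg1.le⟩
  obtain ⟨r, hrmem, hr⟩ := hsub h0mem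
  refine ⟨r, lt_of_lt_of_le hr1pos hrmem.1, ?_⟩
  have : (1 / Real.sqrt (2 * Real.pi)) * (∫ ξ, Φ r ξ) = r := by
    have := hr
    rw [hgdef] at this
    simp only at this
    linarith
  rw [hΦ] at this
  simp only at this
  exact this.symm
end

section
/- For every K > 3 there exists r̂ > 0 such that r̂ = √(3/(2π)) ∫_ℝ ξ · sinh(Kξr̂/√3)/(2 cosh(Kξr̂/√3) + 1) · exp(−ξ²/2) dξ. -/
open Real MeasureTheory

lemma integrable_pow_gauss (n : ℕ) :
    Integrable fun x : ℝ => x ^ n * Real.exp (-x ^ 2 / 2) := by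
  have h := integrable_rpow_mul_exp_neg_mul_sq (b := (1/2 : ℝ)) (by norm_num)
    (s := (n : ℝ)) (by exact_mod_cast lt_of_lt_of_le (by norm_num : (-1:ℝ) < 0) (Nat.cast_nonneg n))
  have e : (fun x : ℝ => x ^ (n : ℝ) * Real.exp (-(1/2) * x ^ 2))
      = fun x : ℝ => x ^ n * Real.exp (-x ^ 2 / 2) := by
    funext x
    rw [Real.rpow_natCast]
    ring_nf
  rwa [e] at h

lemma gauss_M0 : (∫ x : ℝ, Real.exp (-x ^ 2 / 2)) = Real.sqrt (2 * π) := by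
  have h := integral_gaussian (1/2 : ℝ)
  have e : (fun x : ℝ => Real.exp (-(1/2 : ℝ) * x ^ 2)) = fun x => Real.exp (-x ^ 2 / 2) := by
    funext x; ring_nf
  rw [e] at h
  rw [h]
  rw [show π / (1/2:ℝ) = 2 * π by ring]

lemma gauss_rec (n : ℕ) :
    (∫ x : ℝ, x ^ (n + 2) * Real.exp (-x ^ 2 / 2))
      = (n + 1 : ℝ) * ∫ x : ℝ, x ^ n * Real.exp (-x ^ 2 / 2) := by
  have hu : ∀ x : ℝ, HasDerivAt (fun y : ℝ => y ^ (n + 1))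
      ((n + 1 : ℝ) * x ^ n) x := by
    intro x
    simpa using hasDerivAt_pow (n + 1) x
  have hv : ∀ x : ℝ, HasDerivAt (fun y : ℝ => Real.exp (-y ^ 2 / 2))
      (-x * Real.exp (-x ^ 2 / 2)) x := by
    intro x
    have h1 : HasDerivAt (fun y : ℝ => -y ^ 2 / 2) (-x) x := by
      have := (hasDerivAt_pow 2 x).neg.div_const 2
      simpa using this.congr_deriv (by ring)
    simpa [mul_comm] using h1.exp
  have huv' : Integrable ((fun x : ℝ => x ^ (n + 1)) * fun x => -x * Real.exp (-x ^ 2 / 2)) := by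
    have := (integrable_pow_gauss (n + 2)).neg
    apply this.congr
    filter_upwards with x
    simp [Pi.mul_apply]
    ring
  have hu'v : Integrable ((fun x : ℝ => (n + 1 : ℝ) * x ^ n) * fun x => Real.exp (-x ^ 2 / 2)) := by
    have := (integrable_pow_gauss n).const_mul ((n : ℝ) + 1)
    apply this.congr
    filter_upwards with x
    simp [Pi.mul_apply]
    ring
  have huv : Integrable ((fun x : ℝ => x ^ (n + 1)) * fun x => Real.exp (-x ^ 2 / 2)) := by
    apply (integrable_pow_gauss (n + 1)).congr
    filter_upwards with x
    simp [Pi.mul_apply]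
  have h := MeasureTheory.integral_mul_deriv_eq_deriv_mul_of_integrable (fun x _ => hu x) (fun x _ => hv x) huv' hu'v huv
  have e1 : (∫ x : ℝ, x ^ (n + 1) * (-x * Real.exp (-x ^ 2 / 2)))
      = -∫ x : ℝ, x ^ (n + 2) * Real.exp (-x ^ 2 / 2) := by
    rw [← integral_neg]
    congr 1; funext x; ring
  have e2 : (∫ x : ℝ, (n + 1 : ℝ) * x ^ n * Real.exp (-x ^ 2 / 2))
      = (n + 1 : ℝ) * ∫ x : ℝ, x ^ n * Real.exp (-x ^ 2 / 2) := by
    rw [← integral_const_mul]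
    congr 1; funext x; ring
  rw [e1, e2] at h
  linarith [h]

lemma gauss_M2 : (∫ x : ℝ, x ^ 2 * Real.exp (-x ^ 2 / 2)) = Real.sqrt (2 * π) := by
  have h := gauss_rec 0
  simpa [gauss_M0] using h

lemma gauss_M4 : (∫ x : ℝ, x ^ 4 * Real.exp (-x ^ 2 / 2)) = 3 * Real.sqrt (2 * π) := by
  have h := gauss_rec 2
  rw [gauss_M2] at h
  norm_num at h ⊢
  linarith

lemma cosh_den_pos (x : ℝ) : (0:ℝ) < 2 * Real.cosh x + 1 := by
  have := Real.one_le_cosh x; linarith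

lemma f_abs_le_half (x : ℝ) : |Real.sinh x / (2 * Real.cosh x + 1)| ≤ 1 / 2 := by
  have hd := cosh_den_pos x
  rw [abs_div, abs_of_pos hd, div_le_iff₀ hd]
  have h1 : |Real.sinh x| < Real.cosh x := by
    rcases le_total 0 x with h | h
    · rw [abs_of_nonneg (Real.sinh_nonneg_iff.2 h)]
      exact Real.sinh_lt_cosh x
    · rw [abs_of_nonpos (Real.sinh_nonpos_iff.2 h)]
      have := Real.sinh_lt_cosh (-x)
      simpa using this
  nlinarith [Real.one_le_cosh x]

lemma sinh_le_mul_cosh {x : ℝ} (hx : 0 ≤ x) : Real.sinh x ≤ x * Real.cosh x := by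
  have hmono : MonotoneOn (fun y : ℝ => y * Real.cosh y - Real.sinh y) (Set.Ici 0) := by
    apply monotoneOn_of_hasDerivWithinAt_nonneg (convex_Ici 0)
      (f' := fun y : ℝ => y * Real.sinh y)
    · fun_prop
    · intro y hy
      have h : HasDerivAt (fun y : ℝ => y * Real.cosh y - Real.sinh y) (y * Real.sinh y) y := by
        have := ((hasDerivAt_id y).mul (Real.hasDerivAt_cosh y)).sub (Real.hasDerivAt_sinh y)
        have e : 1 * Real.cosh y + id y * Real.sinh y - Real.cosh y = y * Real.sinh y := by
          simp [id]
        rw [e] at this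
        exact this
      exact h.hasDerivWithinAt
    · intro y hy
      rw [interior_Ici] at hy
      have : (0:ℝ) < y := hy
      exact mul_nonneg this.le (Real.sinh_nonneg_iff.2 this.le)
  have := hmono (by exact Set.self_mem_Ici) (Set.mem_Ici.2 hx) hx
  simpa using this

lemma key_ineq {x : ℝ} (hx : 0 ≤ x) :
    2 * x * Real.cosh x + x - 3 * Real.sinh x ≤ x ^ 3 * Real.cosh x := by
  have hmono : MonotoneOn
      (fun y : ℝ => y ^ 3 * Real.cosh y - (2 * y * Real.cosh y + y - 3 * Real.sinh y))
      (Set.Ici 0) := by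
    apply monotoneOn_of_hasDerivWithinAt_nonneg (convex_Ici 0)
      (f' := fun y : ℝ => 3 * y ^ 2 * Real.cosh y + y ^ 3 * Real.sinh y
        + Real.cosh y - 1 - 2 * y * Real.sinh y)
    · fun_prop
    · intro y hy
      have h : HasDerivAt
          (fun y : ℝ => y ^ 3 * Real.cosh y - (2 * y * Real.cosh y + y - 3 * Real.sinh y))
          (3 * y ^ 2 * Real.cosh y + y ^ 3 * Real.sinh y
            + Real.cosh y - 1 - 2 * y * Real.sinh y) y := by
        have h1 : HasDerivAt (fun y : ℝ => y ^ 3) (3 * y ^ 2) y := by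
          simpa using hasDerivAt_pow 3 y
        have h2 : HasDerivAt (fun y : ℝ => 2 * y) 2 y := by
          simpa using (hasDerivAt_id y).const_mul 2
        have := ((h1.mul (Real.hasDerivAt_cosh y)).sub
          (((h2.mul (Real.hasDerivAt_cosh y)).add (hasDerivAt_id y)).sub
            ((Real.hasDerivAt_sinh y).const_mul 3)))
        have e : 3 * y ^ 2 * Real.cosh y + y ^ 3 * Real.sinh y -
            (2 * Real.cosh y + 2 * y * Real.sinh y + 1 - 3 * Real.cosh y)
            = 3 * y ^ 2 * Real.cosh y + y ^ 3 * Real.sinh y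
              + Real.cosh y - 1 - 2 * y * Real.sinh y := by ring
        have hf : (fun y : ℝ => y ^ 3 * Real.cosh y - (2 * y * Real.cosh y + y - 3 * Real.sinh y))
            = ((fun y : ℝ => y ^ 3) * Real.cosh
              - ((fun y : ℝ => 2 * y) * Real.cosh + id - fun y => 3 * Real.sinh y)) := by
          funext z; simp [id, Pi.mul_apply]
        rw [hf, ← e]
        exact this
      exact h.hasDerivWithinAt
    · intro y hy
      rw [interior_Ici] at hy
      have hy0 : (0:ℝ) < y := hy
      have h1 : Real.sinh y ≤ y * Real.cosh y := sinh_le_mul_cosh hy0.le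
      have h2 : 1 ≤ Real.cosh y := Real.one_le_cosh y
      have h3 : 0 ≤ Real.sinh y := Real.sinh_nonneg_iff.2 hy0.le
      nlinarith [mul_nonneg (pow_nonneg hy0.le 3) h3, sq_nonneg y]
  have := hmono Set.self_mem_Ici (Set.mem_Ici.2 hx) hx
  simp only [Real.cosh_zero, Real.sinh_zero] at this
  nlinarith [this]

lemma f_lower {x : ℝ} (hx : 0 ≤ x) :
    x / 3 - x ^ 3 / 6 ≤ Real.sinh x / (2 * Real.cosh x + 1) := by
  have hd := cosh_den_pos x
  rw [le_div_iff₀ hd]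
  have hk := key_ineq hx
  nlinarith [pow_nonneg hx 3, Real.one_le_cosh x]

lemma pt_lower {c : ℝ} (hc : 0 ≤ c) (ξ : ℝ) :
    c * ξ ^ 2 / 3 - c ^ 3 * ξ ^ 4 / 6
      ≤ ξ * (Real.sinh (c * ξ) / (2 * Real.cosh (c * ξ) + 1)) := by
  have key : ∀ t : ℝ, 0 ≤ t →
      c * t ^ 2 / 3 - c ^ 3 * t ^ 4 / 6
        ≤ t * (Real.sinh (c * t) / (2 * Real.cosh (c * t) + 1)) := by
    intro t ht
    have hx : 0 ≤ c * t := mul_nonneg hc ht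
    have h := f_lower hx
    have := mul_le_mul_of_nonneg_left h ht
    calc c * t ^ 2 / 3 - c ^ 3 * t ^ 4 / 6
        = t * (c * t / 3 - (c * t) ^ 3 / 6) := by ring
      _ ≤ t * (Real.sinh (c * t) / (2 * Real.cosh (c * t) + 1)) := this
  rcases le_total 0 ξ with h | h
  · exact key ξ h
  · have h2 := key (-ξ) (by linarith)
    have e : Real.sinh (c * -ξ) / (2 * Real.cosh (c * -ξ) + 1)
        = -(Real.sinh (c * ξ) / (2 * Real.cosh (c * ξ) + 1)) := by
      rw [show c * -ξ = -(c * ξ) by ring, Real.sinh_neg, Real.cosh_neg]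
      ring
    rw [e] at h2
    calc c * ξ ^ 2 / 3 - c ^ 3 * ξ ^ 4 / 6
        = c * (-ξ) ^ 2 / 3 - c ^ 3 * (-ξ) ^ 4 / 6 := by ring
      _ ≤ -ξ * -(Real.sinh (c * ξ) / (2 * Real.cosh (c * ξ) + 1)) := h2
      _ = ξ * (Real.sinh (c * ξ) / (2 * Real.cosh (c * ξ) + 1)) := by ring

lemma cont_Fc (c : ℝ) : Continuous fun ξ : ℝ =>
    ξ * (Real.sinh (c * ξ) / (2 * Real.cosh (c * ξ) + 1)) * Real.exp (-ξ ^ 2 / 2) := by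
  apply Continuous.mul
  · apply Continuous.mul continuous_id
    apply Continuous.div
    · fun_prop
    · fun_prop
    · intro x; exact ne_of_gt (cosh_den_pos _)
  · fun_prop

lemma norm_Fc_le (c ξ : ℝ) :
    ‖ξ * (Real.sinh (c * ξ) / (2 * Real.cosh (c * ξ) + 1)) * Real.exp (-ξ ^ 2 / 2)‖
      ≤ (1 + ξ ^ 2) / 4 * Real.exp (-ξ ^ 2 / 2) := by
  have he : 0 < Real.exp (-ξ ^ 2 / 2) := Real.exp_pos _
  rw [Real.norm_eq_abs, abs_mul, abs_mul, abs_of_pos he]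
  apply mul_le_mul_of_nonneg_right _ he.le
  have h1 := f_abs_le_half (c * ξ)
  have h2 : |ξ| ≤ (1 + ξ ^ 2) / 2 := by
    nlinarith [sq_nonneg (|ξ| - 1), sq_abs ξ]
  calc |ξ| * |Real.sinh (c * ξ) / (2 * Real.cosh (c * ξ) + 1)|
      ≤ (1 + ξ ^ 2) / 2 * (1 / 2) := by
        exact mul_le_mul h2 h1 (abs_nonneg _) (by positivity)
    _ = (1 + ξ ^ 2) / 4 := by ring

lemma integrable_bound : Integrable fun ξ : ℝ => (1 + ξ ^ 2) / 4 * Real.exp (-ξ ^ 2 / 2) := by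
  have h0 := integrable_pow_gauss 0
  have h2 := integrable_pow_gauss 2
  have := (h0.add h2).const_mul (1/4 : ℝ)
  apply this.congr
  filter_upwards with x
  simp only [Pi.add_apply, pow_zero]
  ring

lemma integrable_Fc (c : ℝ) : Integrable fun ξ : ℝ =>
    ξ * (Real.sinh (c * ξ) / (2 * Real.cosh (c * ξ) + 1)) * Real.exp (-ξ ^ 2 / 2) := by
  apply Integrable.mono' integrable_bound ((cont_Fc c).aestronglyMeasurable)
  filter_upwards with ξ
  exact norm_Fc_le c ξ

lemma cont_G (K : ℝ) : Continuous fun r : ℝ =>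
    ∫ ξ : ℝ, ξ * (Real.sinh (K * ξ * r / Real.sqrt 3) /
      (2 * Real.cosh (K * ξ * r / Real.sqrt 3) + 1)) * Real.exp (-ξ ^ 2 / 2) := by
  apply MeasureTheory.continuous_of_dominated
    (bound := fun ξ : ℝ => (1 + ξ ^ 2) / 4 * Real.exp (-ξ ^ 2 / 2))
  · intro r
    have e : (fun ξ : ℝ => ξ * (Real.sinh (K * ξ * r / Real.sqrt 3) /
        (2 * Real.cosh (K * ξ * r / Real.sqrt 3) + 1)) * Real.exp (-ξ ^ 2 / 2))
        = fun ξ : ℝ => ξ * (Real.sinh ((K * r / Real.sqrt 3) * ξ) /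
          (2 * Real.cosh ((K * r / Real.sqrt 3) * ξ) + 1)) * Real.exp (-ξ ^ 2 / 2) := by
      funext ξ
      rw [show K * ξ * r / Real.sqrt 3 = (K * r / Real.sqrt 3) * ξ by ring]
    rw [e]
    exact (cont_Fc _).aestronglyMeasurable
  · intro r
    filter_upwards with ξ
    rw [show K * ξ * r / Real.sqrt 3 = (K * r / Real.sqrt 3) * ξ by ring]
    exact norm_Fc_le _ ξ
  · exact integrable_bound
  · filter_upwards with ξ
    apply Continuous.mul
    · apply Continuous.mul continuous_const
      apply Continuous.div
      · fun_prop
      · fun_prop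
      · intro r; exact ne_of_gt (cosh_den_pos _)
    · fun_prop

theorem potts_fixed_point_exists (K : ℝ) (hK : 3 < K) :
    ∃ r : ℝ, 0 < r ∧
      r = Real.sqrt (3 / (2 * Real.pi)) *
        ∫ ξ : ℝ, ξ * (Real.sinh (K * ξ * r / Real.sqrt 3) /
          (2 * Real.cosh (K * ξ * r / Real.sqrt 3) + 1)) * Real.exp (-ξ^2 / 2) := by
  have hπ : (0:ℝ) < π := Real.pi_pos
  set A : ℝ := Real.sqrt (3 / (2 * π)) with hA
  have hApos : 0 < A := Real.sqrt_pos.2 (by positivity)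
  set t : ℝ := Real.sqrt 3 with htdef
  have ht2 : t ^ 2 = 3 := Real.sq_sqrt (by norm_num)
  have htpos : 0 < t := Real.sqrt_pos.2 (by norm_num)
  have hAsq : A * Real.sqrt (2 * π) = t := by
    rw [hA, htdef, ← Real.sqrt_mul (by positivity)]
    congr 1
    field_simp
  set G : ℝ → ℝ := fun r => A *
    ∫ ξ : ℝ, ξ * (Real.sinh (K * ξ * r / Real.sqrt 3) /
      (2 * Real.cosh (K * ξ * r / Real.sqrt 3) + 1)) * Real.exp (-ξ ^ 2 / 2) with hG
  have hGcont : Continuous G := continuous_const.mul (cont_G K)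
  -- the left endpoint
  set a : ℝ := Real.sqrt ((K - 3) / K ^ 3) with hadef
  have hKpos : (0:ℝ) < K := by linarith
  have ha2 : a ^ 2 = (K - 3) / K ^ 3 := Real.sq_sqrt (div_nonneg (by linarith) (by positivity))
  have hapos : 0 < a := Real.sqrt_pos.2 (div_pos (by linarith) (by positivity))
  -- lower bound for G a
  set c : ℝ := K * a / t with hcdef
  have hcpos : 0 < c := by positivity
  have hFa_int := integrable_Fc (K * a / Real.sqrt 3)
  have hFa_int' : Integrable (fun ξ : ℝ => ξ * (Real.sinh (K * ξ * a / Real.sqrt 3) /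
      (2 * Real.cosh (K * ξ * a / Real.sqrt 3) + 1)) * Real.exp (-ξ ^ 2 / 2)) := by
    apply hFa_int.congr
    filter_upwards with ξ
    rw [show K * a / Real.sqrt 3 * ξ = K * ξ * a / Real.sqrt 3 by ring]
  have hlow_int : Integrable (fun ξ : ℝ =>
      (c * ξ ^ 2 / 3 - c ^ 3 * ξ ^ 4 / 6) * Real.exp (-ξ ^ 2 / 2)) := by
    have h1 := (integrable_pow_gauss 2).const_mul (c / 3)
    have h2 := (integrable_pow_gauss 4).const_mul (c ^ 3 / 6)
    apply (h1.sub h2).congr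
    filter_upwards with ξ
    simp only [Pi.sub_apply]
    ring
  have hIlow : (∫ ξ : ℝ, (c * ξ ^ 2 / 3 - c ^ 3 * ξ ^ 4 / 6) * Real.exp (-ξ ^ 2 / 2))
      = c / 3 * Real.sqrt (2 * π) - c ^ 3 / 2 * Real.sqrt (2 * π) := by
    have e : (fun ξ : ℝ => (c * ξ ^ 2 / 3 - c ^ 3 * ξ ^ 4 / 6) * Real.exp (-ξ ^ 2 / 2))
        = fun ξ : ℝ => (c / 3) * (ξ ^ 2 * Real.exp (-ξ ^ 2 / 2))
          - (c ^ 3 / 6) * (ξ ^ 4 * Real.exp (-ξ ^ 2 / 2)) := by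
      funext ξ; ring
    rw [e, integral_sub ((integrable_pow_gauss 2).const_mul _)
      ((integrable_pow_gauss 4).const_mul _), integral_const_mul, integral_const_mul,
      gauss_M2, gauss_M4]
    ring
  have hmono : (∫ ξ : ℝ, (c * ξ ^ 2 / 3 - c ^ 3 * ξ ^ 4 / 6) * Real.exp (-ξ ^ 2 / 2))
      ≤ ∫ ξ : ℝ, ξ * (Real.sinh (K * ξ * a / Real.sqrt 3) /
        (2 * Real.cosh (K * ξ * a / Real.sqrt 3) + 1)) * Real.exp (-ξ ^ 2 / 2) := by
    apply integral_mono hlow_int hFa_int'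
    intro ξ
    have h := pt_lower hcpos.le ξ
    have he : (0:ℝ) < Real.exp (-ξ ^ 2 / 2) := Real.exp_pos _
    have := mul_le_mul_of_nonneg_right h he.le
    calc (c * ξ ^ 2 / 3 - c ^ 3 * ξ ^ 4 / 6) * Real.exp (-ξ ^ 2 / 2)
        ≤ ξ * (Real.sinh (c * ξ) / (2 * Real.cosh (c * ξ) + 1)) * Real.exp (-ξ ^ 2 / 2) := this
      _ = ξ * (Real.sinh (K * ξ * a / Real.sqrt 3) /
          (2 * Real.cosh (K * ξ * a / Real.sqrt 3) + 1)) * Real.exp (-ξ ^ 2 / 2) := by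
          rw [hcdef, htdef, show K * a / Real.sqrt 3 * ξ = K * ξ * a / Real.sqrt 3 by ring]
  have hGa : a < G a := by
    have h1 : A * (c / 3 * Real.sqrt (2 * π) - c ^ 3 / 2 * Real.sqrt (2 * π)) ≤ G a := by
      rw [hG]
      apply mul_le_mul_of_nonneg_left _ hApos.le
      rw [← hIlow]
      exact hmono
    have h2 : A * (c / 3 * Real.sqrt (2 * π) - c ^ 3 / 2 * Real.sqrt (2 * π))
        = t * c / 3 - t * c ^ 3 / 2 := by
      have : A * (c / 3 * Real.sqrt (2 * π) - c ^ 3 / 2 * Real.sqrt (2 * π))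
          = (A * Real.sqrt (2 * π)) * (c / 3) - (A * Real.sqrt (2 * π)) * (c ^ 3 / 2) := by ring
      rw [this, hAsq]; ring
    have e1 : t * c = K * a := by
      rw [hcdef]; field_simp
    have hc2 : c ^ 2 = K ^ 2 * a ^ 2 / 3 := by
      rw [hcdef, div_pow, ht2]; ring
    have e2 : t * c ^ 3 = K ^ 3 * a ^ 3 / 3 := by
      calc t * c ^ 3 = (t * c) * c ^ 2 := by ring
        _ = K * a * (K ^ 2 * a ^ 2 / 3) := by rw [e1, hc2]
        _ = K ^ 3 * a ^ 3 / 3 := by ring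
    have e3 : K ^ 3 * a ^ 2 = K - 3 := by
      rw [ha2, mul_comm, div_mul_cancel₀ _ (by positivity : (K:ℝ) ^ 3 ≠ 0)]
    have : a < t * c / 3 - t * c ^ 3 / 2 := by
      rw [e1, e2]
      nlinarith [hapos, hK]
    linarith [h1, h2 ▸ this]
  -- upper bound for G at b
  set b : ℝ := a + 2 with hbdef
  have hbig : Real.sqrt (2 * π) / 2 * A < b := by
    have h3 : A * Real.sqrt (2 * π) = t := hAsq
    have ht4 : t < 2 := by nlinarith [htpos]
    have : Real.sqrt (2 * π) / 2 * A = t / 2 := by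
      rw [← h3]; ring
    rw [this, hbdef]
    linarith
  have hGb : G b < b := by
    have hbound : ‖∫ ξ : ℝ, ξ * (Real.sinh (K * ξ * b / Real.sqrt 3) /
        (2 * Real.cosh (K * ξ * b / Real.sqrt 3) + 1)) * Real.exp (-ξ ^ 2 / 2)‖
        ≤ ∫ ξ : ℝ, (1 + ξ ^ 2) / 4 * Real.exp (-ξ ^ 2 / 2) := by
      apply norm_integral_le_of_norm_le integrable_bound
      filter_upwards with ξ
      rw [show K * ξ * b / Real.sqrt 3 = (K * b / Real.sqrt 3) * ξ by ring]
      exact norm_Fc_le _ ξ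
    have hIbound : (∫ ξ : ℝ, (1 + ξ ^ 2) / 4 * Real.exp (-ξ ^ 2 / 2))
        = Real.sqrt (2 * π) / 2 := by
      have e : (fun ξ : ℝ => (1 + ξ ^ 2) / 4 * Real.exp (-ξ ^ 2 / 2))
          = fun ξ : ℝ => (1 / 4) * (ξ ^ 0 * Real.exp (-ξ ^ 2 / 2))
            + (1 / 4) * (ξ ^ 2 * Real.exp (-ξ ^ 2 / 2)) := by
        funext ξ; ring
      rw [e, integral_add ((integrable_pow_gauss 0).const_mul _)
        ((integrable_pow_gauss 2).const_mul _), integral_const_mul, integral_const_mul]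
      have e0 : (∫ ξ : ℝ, ξ ^ 0 * Real.exp (-ξ ^ 2 / 2)) = Real.sqrt (2 * π) := by
        rw [← gauss_M0]; congr 1; funext ξ; ring
      rw [e0, gauss_M2]; ring
    rw [hIbound] at hbound
    have : G b ≤ Real.sqrt (2 * π) / 2 * A := by
      rw [hG]
      calc A * (∫ ξ : ℝ, ξ * (Real.sinh (K * ξ * b / Real.sqrt 3) /
          (2 * Real.cosh (K * ξ * b / Real.sqrt 3) + 1)) * Real.exp (-ξ ^ 2 / 2))
          ≤ A * ‖∫ ξ : ℝ, ξ * (Real.sinh (K * ξ * b / Real.sqrt 3) /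
            (2 * Real.cosh (K * ξ * b / Real.sqrt 3) + 1)) * Real.exp (-ξ ^ 2 / 2)‖ := by
            apply mul_le_mul_of_nonneg_left (le_norm_self _) hApos.le
        _ ≤ A * (Real.sqrt (2 * π) / 2) := mul_le_mul_of_nonneg_left hbound hApos.le
        _ = Real.sqrt (2 * π) / 2 * A := by ring
    linarith
  -- intermediate value theorem
  have hab : a ≤ b := by rw [hbdef]; linarith
  have hΦ : ContinuousOn (fun r => G r - r) (Set.Icc a b) :=
    (hGcont.sub continuous_id).continuousOn
  have hIVT := intermediate_value_Icc' hab hΦ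
  have h0mem : (0:ℝ) ∈ Set.Icc (G b - b) (G a - a) := by
    constructor <;> linarith
  obtain ⟨r, hrmem, hr⟩ := hIVT h0mem
  refine ⟨r, lt_of_lt_of_le hapos hrmem.1, ?_⟩
  have : G r = r := by linarith [hr, sub_eq_zero.mp hr]
  rw [hG] at this
  exact this.symm
end
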